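/- arXiv:2508.08260 — 4 statements merged into one kernel-verified Lean document; each statement's English description precedes it below -/
import Mathlib

section
/- Let (X,d) be a metric space and K a nonempty subset of X. Let A, B, S, T be selfmaps of K. Suppose there exist a function ψ satisfying Condition-A and a function φ ∈ Φ such that for all x, y ∈ K: ψ(d(Sx,Ty), d(Sx,Ty)) ≤ φ(max{ψ(d(Ax,By), d(Ax,Sx)), ψ(d(Ax,By), d(By,Ty)), ψ(d(Ax,Sx), d(By,Ty)), ψ(d(By,Ty), d(Ax,Sx)), min{ψ(d(By,Sx), d(Ax,Sx)), ψ(d(Ax,Ty), d(By,Ty))}, min{ψ(d(By,Sx), d(By,Ty)), ψ(d(Ax,Ty), d(Ax,Sx))}}). Assume the pairs (A,S) and (B,T) are weakly compatible, the closure of T(K) is contained in A(K), and the closure of S(K) is contained in B(K). If at least one of the sets closure of T(K), closure of S(K), A(K), or B(K) is complete, then A, B, S and T have a unique common fixed point. -/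
open Set
open scoped NNReal

/-- A two-variable auxiliary function `ψ : ℝ₊ × ℝ₊ → ℝ₊` satisfies Condition-A if it is
continuous, monotone increasing in each argument, `ψ(0,0) = 0`, and `ψ(t,0) = 0` implies
`t = 0`. -/
def ConditionA (ψ : ℝ≥0 → ℝ≥0 → ℝ≥0) : Prop :=
  Continuous (Function.uncurry ψ) ∧
  (∀ t, Monotone fun s => ψ s t) ∧
  (∀ s, Monotone fun t => ψ s t) ∧
  ψ 0 0 = 0 ∧
  ∀ t, ψ t 0 = 0 → t = 0

/-- `φ ∈ Φ`: `φ : ℝ₊ → ℝ₊` is monotonically increasing, continuous, and `0 < φ(t) < t`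
for all `t > 0`. -/
def InPhi (φ : ℝ≥0 → ℝ≥0) : Prop :=
  Monotone φ ∧ Continuous φ ∧ ∀ t, 0 < t → 0 < φ t ∧ φ t < t

/-!
Write `g t = ψ t t`. The contractive condition gives `g (d(Sx, Ty)) ≤ φ (g c)` for every bound `c`
on `d(Ax, By)`, `d(Ax, Sx)`, `d(By, Ty)` and `min (d(By, Sx)) (d(Ax, Ty))`; since `φ t < t`, this
forces `Sx = Ty` whenever `c` can be taken to be `d(Sx, Ty)` itself. Along the Jungck sequence
`y (2k) = T x(2k) = A x(2k+1)`, `y (2k+1) = S x(2k+1) = B x(2k+2)` the gaps `d(y n, y (n+1))`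
therefore decrease to `0`, and if `y` were not Cauchy there would be an `e > 0` and pairs of
terms at distance arbitrarily close to `e` from above, with arbitrarily small neighbouring gaps,
giving `g e ≤ φ (g e)`. Completeness yields a limit `z = A u` or `z = B v`; letting the
sequence tend to `z` in the condition gives coincidence points of both pairs with common
value `z`, and weak compatibility makes `z` the unique common fixed point.
-/

open Filter Topology

structure IsAlteringDistance (g : ℝ≥0 → ℝ≥0) : Prop where
  continuous : Continuous g
  monotone : Monotone g
  eq_zero_iff : ∀ t, g t = 0 ↔ t = 0

namespace ConditionA

variable {ψ : ℝ≥0 → ℝ≥0 → ℝ≥0}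

lemma le_diag (hψ : ConditionA ψ) {p q c : ℝ≥0} (hp : p ≤ c) (hq : q ≤ c) : ψ p q ≤ ψ c c :=
  (hψ.2.1 q hp).trans (hψ.2.2.1 c hq)

lemma isAlteringDistance_diag (hψ : ConditionA ψ) : IsAlteringDistance fun t => ψ t t where
  continuous := hψ.1.comp (continuous_id.prodMk continuous_id)
  monotone _ _ hst := hψ.le_diag hst hst
  eq_zero_iff t :=
    ⟨fun h => hψ.2.2.2.2 t (nonpos_iff_eq_zero.1 ((hψ.2.2.1 t (zero_le : 0 ≤ t)).trans_eq h)),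
      fun h => h ▸ hψ.2.2.2.1⟩

end ConditionA

namespace IsAlteringDistance

variable {g φ : ℝ≥0 → ℝ≥0}

lemma eq_zero_of_le_phi (hg : IsAlteringDistance g) (hφ : InPhi φ) {s c : ℝ≥0}
    (h : g s ≤ φ (g c)) (hcs : c ≤ s) : s = 0 := by
  by_contra hs
  have hpos : 0 < g s := pos_iff_ne_zero.2 fun h0 => hs ((hg.eq_zero_iff s).1 h0)
  exact (h.trans (hφ.1 (hg.monotone hcs))).not_gt (hφ.2.2 _ hpos).2

lemma eq_zero_of_forall_pos_le_phi (hg : IsAlteringDistance g) (hφ : InPhi φ) {e : ℝ≥0}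
    (h : ∀ δ > 0, g e ≤ φ (g (e + δ))) : e = 0 := by
  have hlim : Tendsto (fun δ => φ (g (e + δ))) (𝓝[>] 0) (𝓝 (φ (g e))) := by
    refine ((hφ.2.1.comp hg.continuous).tendsto e).comp ?_
    exact ((continuous_const_add e).tendsto' 0 e (add_zero e)).mono_left nhdsWithin_le_nhds
  exact hg.eq_zero_of_le_phi hφ (ge_of_tendsto hlim (eventually_nhdsWithin_of_forall h)) le_rfl

lemma tendsto_zero_of_le_phi_max (hg : IsAlteringDistance g) (hφ : InPhi φ) {d : ℕ → ℝ≥0}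
    (h : ∀ n, g (d (n + 1)) ≤ φ (g (max (d n) (d (n + 1))))) : Tendsto d atTop (𝓝 0) := by
  have hanti : Antitone d := antitone_nat_of_succ_le fun n => by
    by_contra! hlt
    have hzero := hg.eq_zero_of_le_phi hφ (h n) (max_le hlt.le le_rfl)
    exact (zero_le : 0 ≤ d n).not_gt (hzero ▸ hlt)
  have hstep : ∀ n, g (d (n + 1)) ≤ φ (g (d n)) := fun n => by
    simpa [max_eq_left (hanti n.le_succ)] using h n
  have hlim := tendsto_atTop_ciInf hanti (OrderBot.bddBelow _)
  have hglim := (hg.continuous.tendsto _).comp hlim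
  have hinf : ⨅ n, d n = 0 := hg.eq_zero_of_le_phi hφ
    (le_of_tendsto_of_tendsto' (hglim.comp (tendsto_add_atTop_nat 1))
      ((hφ.2.1.tendsto _).comp hglim) hstep) le_rfl
  rwa [hinf] at hlim

end IsAlteringDistance

lemma tendsto_two_mul_add_atTop (r : ℕ) : Tendsto (fun k => 2 * k + r) atTop atTop :=
  tendsto_atTop_mono (fun k => show k ≤ 2 * k + r by omega) tendsto_id

lemma CauchySeq.exists_mem_tendsto_of_subseq {α : Type*} [UniformSpace α] {y : ℕ → α}
    (hy : CauchySeq y) {s : Set α} (hs : IsComplete s) {f : ℕ → ℕ} (hf : Tendsto f atTop atTop)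
    (hmem : ∀ k, y (f k) ∈ s) : ∃ z ∈ s, Tendsto y atTop (𝓝 z) := by
  obtain ⟨z, hz, hlim⟩ := cauchySeq_tendsto_of_isComplete hs hmem (hy.comp_tendsto hf)
  exact ⟨z, hz, tendsto_nhds_of_cauchySeq_of_subseq hy hf hlim⟩

lemma exists_dist_odd_even_near_of_not_cauchySeq {Y : Type*} [PseudoMetricSpace Y] {y : ℕ → Y}
    (hd : Tendsto (fun n => dist (y n) (y (n + 1))) atTop (𝓝 0)) (hy : ¬CauchySeq y) :
    ∃ e > 0, ∀ δ > 0, ∃ i j, e ≤ dist (y (2 * i + 1)) (y (2 * j + 2)) ∧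
      dist (y (2 * i + 1)) (y (2 * j + 2)) ≤ e + δ ∧ dist (y (2 * i)) (y (2 * i + 1)) ≤ δ ∧
      dist (y (2 * j + 1)) (y (2 * j + 2)) ≤ δ := by
  rw [Metric.cauchySeq_iff'] at hy
  push Not at hy
  obtain ⟨ε, hε, hfar⟩ := hy
  refine ⟨ε / 2, by positivity, fun δ hδ => ?_⟩
  set η := min (δ / 2) (ε / 4)
  have hηδ : η ≤ δ / 2 := min_le_left _ _
  have hηε : η ≤ ε / 4 := min_le_right _ _
  obtain ⟨N, hN⟩ := eventually_atTop.1 (hd.eventually (gt_mem_nhds (by positivity : 0 < η)))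
  -- the distances from `y (2N + 1)` to the even terms after it start below `ε / 2` and
  -- eventually exceed it; the first crossing overshoots by at most two small steps
  let p J := ε / 2 ≤ dist (y (2 * N + 1)) (y (2 * (N + J) + 2))
  have hp0 : ¬p 0 := by
    have : dist (y (2 * N + 1)) (y (2 * N + 2)) < η := hN _ (by omega)
    simp only [p, add_zero, not_le]
    linarith
  have hpJ : ∃ J, p J := by
    obtain ⟨n, hn, hεn⟩ := hfar (2 * N + 1)
    rw [dist_comm] at hεn
    obtain ⟨m, rfl | rfl⟩ := Nat.even_or_odd' n
    · refine ⟨m - N - 1, ?_⟩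
      simp only [p, show 2 * (N + (m - N - 1)) + 2 = 2 * m by omega]
      linarith
    · refine ⟨m - N, ?_⟩
      have : dist (y (2 * m + 1)) (y (2 * m + 2)) < η := hN _ (by omega)
      simp only [p, show 2 * (N + (m - N)) + 2 = 2 * m + 2 by omega]
      linarith [dist_triangle (y (2 * N + 1)) (y (2 * m + 2)) (y (2 * m + 1)),
        dist_comm (y (2 * m + 1)) (y (2 * m + 2))]
  obtain ⟨k, hk, hk1⟩ := Nat.exists_not_and_succ_of_not_zero_of_exists hp0 hpJ
  simp only [p, not_le] at hk hk1
  have h1 : dist (y (2 * (N + k) + 2)) (y (2 * (N + k + 1) + 1)) < η := hN _ (by omega)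
  have h2 : dist (y (2 * (N + k + 1) + 1)) (y (2 * (N + k + 1) + 2)) < η := hN _ (by omega)
  have h3 : dist (y (2 * N)) (y (2 * N + 1)) < η := hN _ (by omega)
  refine ⟨N, N + k + 1, hk1, ?_, by linarith, by linarith⟩
  linarith [dist_triangle4 (y (2 * N + 1)) (y (2 * (N + k) + 2)) (y (2 * (N + k + 1) + 1))
    (y (2 * (N + k + 1) + 2))]

section

variable {X : Type*}

structure IsJungckSeq (K : Set X) (A B S T : X → X) (x y : ℕ → X) : Prop where
  mem : ∀ n, x n ∈ K
  even_eq_T : ∀ k, y (2 * k) = T (x (2 * k))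
  even_eq_A : ∀ k, y (2 * k) = A (x (2 * k + 1))
  odd_eq_S : ∀ k, y (2 * k + 1) = S (x (2 * k + 1))
  odd_eq_B : ∀ k, y (2 * k + 1) = B (x (2 * k + 2))

lemma exists_isJungckSeq {K : Set X} {A B S T : X → X} (hK : K.Nonempty)
    (hTA : T '' K ⊆ A '' K) (hSB : S '' K ⊆ B '' K) : ∃ x y, IsJungckSeq K A B S T x y := by
  obtain ⟨x₀, hx₀K⟩ := hK
  choose! fA hfAK hfA using fun p (hp : p ∈ K) => hTA ⟨p, hp, rfl⟩
  choose! fB hfBK hfB using fun p (hp : p ∈ K) => hSB ⟨p, hp, rfl⟩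
  obtain ⟨x, hx₀, hsucc⟩ : ∃ x : ℕ → X, x 0 = x₀ ∧
      ∀ n, x (n + 1) = if Even n then fA (x n) else fB (x n) :=
    ⟨fun n => Nat.rec x₀ (fun n xn => if Even n then fA xn else fB xn) n, rfl, fun _ => rfl⟩
  have hx : ∀ n, x n ∈ K := fun n => by
    induction n with
    | zero => exact hx₀ ▸ hx₀K
    | succ n ih => by_cases hn : Even n <;> simp [hsucc, hn, hfAK _ ih, hfBK _ ih]
  refine ⟨x, fun n => if Even n then T (x n) else S (x n), hx, fun k => by simp, fun k => ?_,
    fun k => by simp, fun k => ?_⟩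
  · simp [hsucc, hfA _ (hx (2 * k))]
  · simp [hsucc (2 * k + 1), hfB _ (hx (2 * k + 1))]

variable [MetricSpace X]

/-- The contractive condition at `(a, s, b, t) = (A x, S x, B y, T y)`, with `g` standing for
the diagonal `t ↦ ψ t t` and the maximum replaced by any bound `c` on the distances entering it. -/
def ContractiveAt (g φ : ℝ≥0 → ℝ≥0) (a s b t : X) : Prop :=
  ∀ c, nndist a b ≤ c → nndist a s ≤ c → nndist b t ≤ c → nndist b s ≤ c ∨ nndist a t ≤ c →
    g (nndist s t) ≤ φ (g c)

lemma contractiveAt_of_le {ψ : ℝ≥0 → ℝ≥0 → ℝ≥0} {φ : ℝ≥0 → ℝ≥0} (hψ : ConditionA ψ)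
    (hφ : Monotone φ) {a s b t : X}
    (h : ψ (nndist s t) (nndist s t) ≤
        φ (max (ψ (nndist a b) (nndist a s))
          (max (ψ (nndist a b) (nndist b t))
          (max (ψ (nndist a s) (nndist b t))
          (max (ψ (nndist b t) (nndist a s))
          (max (min (ψ (nndist b s) (nndist a s)) (ψ (nndist a t) (nndist b t)))
               (min (ψ (nndist b s) (nndist b t)) (ψ (nndist a t) (nndist a s))))))))) :
    ContractiveAt (fun t => ψ t t) φ a s b t := by
  intro c hab has hbt hbsat
  refine h.trans (hφ ?_)
  refine max_le (hψ.le_diag hab has) (max_le (hψ.le_diag hab hbt)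
    (max_le (hψ.le_diag has hbt) (max_le (hψ.le_diag hbt has) (max_le ?_ ?_))))
  · rcases hbsat with hbs | hat
    · exact (min_le_left _ _).trans (hψ.le_diag hbs has)
    · exact (min_le_right _ _).trans (hψ.le_diag hat hbt)
  · rcases hbsat with hbs | hat
    · exact (min_le_left _ _).trans (hψ.le_diag hbs hbt)
    · exact (min_le_right _ _).trans (hψ.le_diag hat has)

namespace ContractiveAt

variable {g φ : ℝ≥0 → ℝ≥0} {a s b t : X}

lemma symm (h : ContractiveAt g φ a s b t) : ContractiveAt g φ b t a s := by
  intro c hba hbt has hatbs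
  rw [nndist_comm]
  exact h c (nndist_comm a b ▸ hba) has hbt hatbs.symm

lemma eq_of_le (hg : IsAlteringDistance g) (hφ : InPhi φ) (h : ContractiveAt g φ a s b t)
    (hab : nndist a b ≤ nndist s t) (has : nndist a s ≤ nndist s t)
    (hbt : nndist b t ≤ nndist s t) (hbsat : nndist b s ≤ nndist s t ∨ nndist a t ≤ nndist s t) :
    s = t :=
  nndist_eq_zero.1 (hg.eq_zero_of_le_phi hφ (h _ hab has hbt hbsat) le_rfl)

lemma eq_of_eq_of_eq (hg : IsAlteringDistance g) (hφ : InPhi φ) (h : ContractiveAt g φ a s b t)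
    (has : a = s) (hbt : b = t) : s = t := by
  subst has hbt
  exact h.eq_of_le hg hφ le_rfl (by simp) (by simp) (.inl (nndist_comm _ _).le)

lemma eq_of_tendsto (hg : IsAlteringDistance g) (hφ : InPhi φ) {b t : ℕ → X}
    (h : ∀ k, ContractiveAt g φ a s (b k) (t k)) (hb : Tendsto b atTop (𝓝 a))
    (ht : Tendsto t atTop (𝓝 a)) : s = a := by
  let c k := max (nndist a (b k)) (max (nndist a s) (max (nndist (b k) (t k)) (nndist (b k) s)))
  have hc : Tendsto c atTop
      (𝓝 (max (nndist a a) (max (nndist a s) (max (nndist a a) (nndist a s))))) :=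
    (tendsto_const_nhds.nndist hb).max
      (tendsto_const_nhds.max ((hb.nndist ht).max (hb.nndist tendsto_const_nhds)))
  simp only [nndist_self, max_self, zero_le, max_eq_right] at hc
  have hle : ∀ k, g (nndist s (t k)) ≤ φ (g (c k)) := fun k =>
    h k (c k) (le_max_left _ _) (le_max_of_le_right (le_max_left _ _))
      (le_max_of_le_right (le_max_of_le_right (le_max_left _ _)))
      (.inl (le_max_of_le_right (le_max_of_le_right (le_max_right _ _))))
  have hlim := le_of_tendsto_of_tendsto' ((hg.continuous.tendsto _).comp
    (tendsto_const_nhds.nndist ht)) ((hφ.2.1.tendsto _).comp ((hg.continuous.tendsto _).comp hc))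
    hle
  exact nndist_eq_zero.1 (hg.eq_zero_of_le_phi hφ hlim (nndist_comm a s).le)

end ContractiveAt

def ContractiveOn (g φ : ℝ≥0 → ℝ≥0) (K : Set X) (A B S T : X → X) : Prop :=
  ∀ x ∈ K, ∀ y ∈ K, ContractiveAt g φ (A x) (S x) (B y) (T y)

namespace ContractiveOn

variable {g φ : ℝ≥0 → ℝ≥0} {K : Set X} {A B S T : X → X}

lemma symm (h : ContractiveOn g φ K A B S T) : ContractiveOn g φ K B A T S :=
  fun x hx y hy => (h y hy x hx).symm

lemma exists_coincidence_of_tendsto (hg : IsAlteringDistance g) (hφ : InPhi φ)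
    (h : ContractiveOn g φ K A B S T) (hSB : S '' K ⊆ B '' K) {x : ℕ → X} (hx : ∀ k, x k ∈ K)
    {u : X} (hu : u ∈ K) (hBx : Tendsto (fun k => B (x k)) atTop (𝓝 (A u)))
    (hTx : Tendsto (fun k => T (x k)) atTop (𝓝 (A u))) :
    S u = A u ∧ ∃ v ∈ K, B v = A u ∧ T v = A u := by
  have hSu : S u = A u := ContractiveAt.eq_of_tendsto hg hφ (fun k => h u hu (x k) (hx k)) hBx hTx
  obtain ⟨v, hv, hBv⟩ := hSB ⟨u, hu, hSu⟩
  have hTv : S u = T v := (h u hu v hv).eq_of_le hg hφ (by simp [hBv, hSu]) (by simp [hSu])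
    (by rw [hBv, hSu]) (.inl (by simp [hBv, hSu]))
  exact ⟨hSu, v, hv, hBv, hTv.symm.trans hSu⟩

lemma existsUnique_common_fixedPoint (hg : IsAlteringDistance g) (hφ : InPhi φ)
    (h : ContractiveOn g φ K A B S T) (hA : MapsTo A K K)
    (hAS : ∀ x ∈ K, A x = S x → A (S x) = S (A x))
    (hBT : ∀ x ∈ K, B x = T x → B (T x) = T (B x)) {u v z : X} (hu : u ∈ K) (hv : v ∈ K)
    (hAu : A u = z) (hSu : S u = z) (hBv : B v = z) (hTv : T v = z) :
    ∃! z, z ∈ K ∧ A z = z ∧ B z = z ∧ S z = z ∧ T z = z := by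
  have hz : z ∈ K := hAu ▸ hA hu
  have hASz : A z = S z := by simpa [hAu, hSu] using hAS u hu (hAu.trans hSu.symm)
  have hBTz : B z = T z := by simpa [hBv, hTv] using hBT v hv (hBv.trans hTv.symm)
  have hSz : S z = z := ((h z hz v hv).eq_of_eq_of_eq hg hφ hASz (hBv.trans hTv.symm)).trans hTv
  have hTz : T z = z :=
    (hSu.symm.trans ((h u hu z hz).eq_of_eq_of_eq hg hφ (hAu.trans hSu.symm) hBTz)).symm
  refine ⟨z, ⟨hz, hASz.trans hSz, hBTz.trans hTz, hSz, hTz⟩, ?_⟩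
  rintro w ⟨hw, hAw, -, hSw, -⟩
  exact hSw.symm.trans (((h w hw z hz).eq_of_eq_of_eq hg hφ (hAw.trans hSw.symm) hBTz).trans hTz)

end ContractiveOn

section Sequence

variable {g φ : ℝ≥0 → ℝ≥0} {y : ℕ → X}

lemma le_phi_max_of_contractiveAt
    (hy : ∀ i j, ContractiveAt g φ (y (2 * i)) (y (2 * i + 1)) (y (2 * j + 1)) (y (2 * j + 2)))
    (n : ℕ) : g (nndist (y (n + 1)) (y (n + 2))) ≤
      φ (g (max (nndist (y n) (y (n + 1))) (nndist (y (n + 1)) (y (n + 2))))) := by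
  obtain ⟨k, rfl | rfl⟩ := Nat.even_or_odd' n
  · exact hy k k _ (le_max_left _ _) (le_max_left _ _) (le_max_right _ _) (.inl (by simp))
  · have h := hy (k + 1) k (max (nndist (y (2 * k + 1)) (y (2 * k + 2)))
      (nndist (y (2 * k + 2)) (y (2 * k + 3)))) (by rw [nndist_comm]; exact le_max_left _ _)
      (le_max_right _ _) (le_max_left _ _) (.inr (by simp [mul_add]))
    rwa [nndist_comm (y (2 * (k + 1) + 1))] at h

lemma cauchySeq_of_contractiveAt (hg : IsAlteringDistance g) (hφ : InPhi φ)
    (hy : ∀ i j, ContractiveAt g φ (y (2 * i)) (y (2 * i + 1)) (y (2 * j + 1)) (y (2 * j + 2))) :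
    CauchySeq y := by
  by_contra hc
  have hd : Tendsto (fun n => dist (y n) (y (n + 1))) atTop (𝓝 0) := by
    simpa using NNReal.tendsto_coe.2 (hg.tendsto_zero_of_le_phi_max
      (d := fun n => nndist (y n) (y (n + 1))) hφ (le_phi_max_of_contractiveAt hy))
  obtain ⟨e, he, hnear⟩ := exists_dist_odd_even_near_of_not_cauchySeq hd hc
  lift e to ℝ≥0 using he.le
  refine he.ne' (NNReal.coe_eq_zero.2 (hg.eq_zero_of_forall_pos_le_phi hφ fun δ hδ => ?_))
  obtain ⟨i, j, h1, h2, h3, h4⟩ := hnear (δ / 3) (by positivity)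
  refine (hg.monotone ?_).trans (hy i j (e + δ) ?_ ?_ ?_ (.inl ?_)) <;>
    rw [← NNReal.coe_le_coe] <;> push_cast
  · exact h1
  · linarith [dist_triangle4 (y (2 * i)) (y (2 * i + 1)) (y (2 * j + 2)) (y (2 * j + 1)),
      dist_comm (y (2 * j + 1)) (y (2 * j + 2))]
  · linarith [e.coe_nonneg]
  · linarith [e.coe_nonneg]
  · linarith [dist_triangle (y (2 * j + 1)) (y (2 * j + 2)) (y (2 * i + 1)),
      dist_comm (y (2 * i + 1)) (y (2 * j + 2))]

end Sequence

namespace IsJungckSeq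

variable {g φ : ℝ≥0 → ℝ≥0} {K : Set X} {A B S T : X → X} {x y : ℕ → X}

lemma contractiveAt (hxy : IsJungckSeq K A B S T x y) (h : ContractiveOn g φ K A B S T)
    (i j : ℕ) : ContractiveAt g φ (y (2 * i)) (y (2 * i + 1)) (y (2 * j + 1)) (y (2 * j + 2)) := by
  have := h _ (hxy.mem (2 * i + 1)) _ (hxy.mem (2 * j + 2))
  rwa [← hxy.even_eq_A, ← hxy.odd_eq_S, ← hxy.odd_eq_B, show 2 * j + 2 = 2 * (j + 1) by ring,
    ← hxy.even_eq_T] at this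

lemma exists_tendsto (hxy : IsJungckSeq K A B S T x y) (hy : CauchySeq y)
    (hTA : closure (T '' K) ⊆ A '' K) (hSB : closure (S '' K) ⊆ B '' K)
    (hcomp : IsComplete (closure (T '' K)) ∨ IsComplete (closure (S '' K)) ∨
      IsComplete (A '' K) ∨ IsComplete (B '' K)) :
    ∃ z, Tendsto y atTop (𝓝 z) ∧ (z ∈ A '' K ∨ z ∈ B '' K) := by
  have hev : Tendsto (fun k => 2 * k) atTop atTop := tendsto_two_mul_add_atTop 0
  have hodd := tendsto_two_mul_add_atTop 1
  rcases hcomp with hc | hc | hc | hc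
  · obtain ⟨z, hz, hlim⟩ := hy.exists_mem_tendsto_of_subseq hc hev fun k =>
      subset_closure (hxy.even_eq_T k ▸ mem_image_of_mem T (hxy.mem _))
    exact ⟨z, hlim, .inl (hTA hz)⟩
  · obtain ⟨z, hz, hlim⟩ := hy.exists_mem_tendsto_of_subseq hc hodd fun k =>
      subset_closure (hxy.odd_eq_S k ▸ mem_image_of_mem S (hxy.mem _))
    exact ⟨z, hlim, .inr (hSB hz)⟩
  · obtain ⟨z, hz, hlim⟩ := hy.exists_mem_tendsto_of_subseq hc hev fun k =>
      hxy.even_eq_A k ▸ mem_image_of_mem A (hxy.mem _)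
    exact ⟨z, hlim, .inl hz⟩
  · obtain ⟨z, hz, hlim⟩ := hy.exists_mem_tendsto_of_subseq hc hodd fun k =>
      hxy.odd_eq_B k ▸ mem_image_of_mem B (hxy.mem _)
    exact ⟨z, hlim, .inr hz⟩

lemma exists_coincidence (hg : IsAlteringDistance g) (hφ : InPhi φ)
    (hxy : IsJungckSeq K A B S T x y) (h : ContractiveOn g φ K A B S T)
    (hTA : T '' K ⊆ A '' K) (hSB : S '' K ⊆ B '' K) {z : X} (hz : Tendsto y atTop (𝓝 z))
    (hzAB : z ∈ A '' K ∨ z ∈ B '' K) :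
    ∃ u ∈ K, ∃ v ∈ K, A u = z ∧ S u = z ∧ B v = z ∧ T v = z := by
  have hsub : ∀ r, Tendsto (fun k => y (2 * k + r)) atTop (𝓝 z) := fun r =>
    hz.comp (tendsto_two_mul_add_atTop r)
  rcases hzAB with ⟨u, hu, rfl⟩ | ⟨v, hv, rfl⟩
  · obtain ⟨hSu, v, hv, hBv, hTv⟩ := h.exists_coincidence_of_tendsto hg hφ hSB
      (fun k => hxy.mem (2 * k + 2)) hu ((hsub 1).congr hxy.odd_eq_B)
      ((hsub 2).congr fun k => hxy.even_eq_T (k + 1))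
    exact ⟨u, hu, v, hv, rfl, hSu, hBv, hTv⟩
  · obtain ⟨hTv, u, hu, hAu, hSu⟩ := h.symm.exists_coincidence_of_tendsto hg hφ hTA
      (fun k => hxy.mem (2 * k + 1)) hv ((hsub 0).congr hxy.even_eq_A)
      ((hsub 1).congr hxy.odd_eq_S)
    exact ⟨u, hu, v, hv, hAu, hSu, rfl, hTv⟩

end IsJungckSeq

end

theorem stmt_0_general {X : Type*} [MetricSpace X] (K : Set X) (hK : K.Nonempty)
    (A B S T : X → X)
    (hA : MapsTo A K K)
    (ψ : ℝ≥0 → ℝ≥0 → ℝ≥0) (hψ : ConditionA ψ)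
    (φ : ℝ≥0 → ℝ≥0) (hφ : InPhi φ)
    (hcontr : ∀ x ∈ K, ∀ y ∈ K,
      ψ (nndist (S x) (T y)) (nndist (S x) (T y)) ≤
        φ (max (ψ (nndist (A x) (B y)) (nndist (A x) (S x)))
          (max (ψ (nndist (A x) (B y)) (nndist (B y) (T y)))
          (max (ψ (nndist (A x) (S x)) (nndist (B y) (T y)))
          (max (ψ (nndist (B y) (T y)) (nndist (A x) (S x)))
          (max (min (ψ (nndist (B y) (S x)) (nndist (A x) (S x)))
                    (ψ (nndist (A x) (T y)) (nndist (B y) (T y))))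
               (min (ψ (nndist (B y) (S x)) (nndist (B y) (T y)))
                    (ψ (nndist (A x) (T y)) (nndist (A x) (S x))))))))))
    (hAS : ∀ x ∈ K, A x = S x → A (S x) = S (A x))
    (hBT : ∀ x ∈ K, B x = T x → B (T x) = T (B x))
    (hTA : closure (T '' K) ⊆ A '' K)
    (hSB : closure (S '' K) ⊆ B '' K)
    (hcomp : IsComplete (closure (T '' K)) ∨ IsComplete (closure (S '' K)) ∨
             IsComplete (A '' K) ∨ IsComplete (B '' K)) :
    ∃! z, z ∈ K ∧ A z = z ∧ B z = z ∧ S z = z ∧ T z = z := by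
  have hg := hψ.isAlteringDistance_diag
  have h : ContractiveOn (fun t => ψ t t) φ K A B S T := fun x hx y hy =>
    contractiveAt_of_le hψ hφ.1 (hcontr x hx y hy)
  obtain ⟨x, y, hxy⟩ := exists_isJungckSeq hK (subset_closure.trans hTA) (subset_closure.trans hSB)
  obtain ⟨z, hz, hzAB⟩ := hxy.exists_tendsto
    (cauchySeq_of_contractiveAt hg hφ (hxy.contractiveAt h)) hTA hSB hcomp
  obtain ⟨u, hu, v, hv, hAu, hSu, hBv, hTv⟩ := hxy.exists_coincidence hg hφ h
    (subset_closure.trans hTA) (subset_closure.trans hSB) hz hzAB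
  exact h.existsUnique_common_fixedPoint hg hφ hA hAS hBT hu hv hAu hSu hBv hTv

theorem stmt_0 {X : Type*} [MetricSpace X] (K : Set X) (hK : K.Nonempty)
    (A B S T : X → X)
    (hA : MapsTo A K K) (hB : MapsTo B K K) (hS : MapsTo S K K) (hT : MapsTo T K K)
    (ψ : ℝ≥0 → ℝ≥0 → ℝ≥0) (hψ : ConditionA ψ)
    (φ : ℝ≥0 → ℝ≥0) (hφ : InPhi φ)
    (hcontr : ∀ x ∈ K, ∀ y ∈ K,
      ψ (nndist (S x) (T y)) (nndist (S x) (T y)) ≤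
        φ (max (ψ (nndist (A x) (B y)) (nndist (A x) (S x)))
          (max (ψ (nndist (A x) (B y)) (nndist (B y) (T y)))
          (max (ψ (nndist (A x) (S x)) (nndist (B y) (T y)))
          (max (ψ (nndist (B y) (T y)) (nndist (A x) (S x)))
          (max (min (ψ (nndist (B y) (S x)) (nndist (A x) (S x)))
                    (ψ (nndist (A x) (T y)) (nndist (B y) (T y))))
               (min (ψ (nndist (B y) (S x)) (nndist (B y) (T y)))
                    (ψ (nndist (A x) (T y)) (nndist (A x) (S x))))))))))
    (hAS : ∀ x ∈ K, A x = S x → A (S x) = S (A x))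
    (hBT : ∀ x ∈ K, B x = T x → B (T x) = T (B x))
    (hTA : closure (T '' K) ⊆ A '' K)
    (hSB : closure (S '' K) ⊆ B '' K)
    (hcomp : IsComplete (closure (T '' K)) ∨ IsComplete (closure (S '' K)) ∨
             IsComplete (A '' K) ∨ IsComplete (B '' K)) :
    ∃! z, z ∈ K ∧ A z = z ∧ B z = z ∧ S z = z ∧ T z = z :=
  stmt_0_general K hK A B S T hA ψ hψ φ hφ hcontr hAS hBT hTA hSB hcomp
end

section
/- Let (X,d) be a metric space and K a nonempty subset of X. Let A and T be selfmaps of K. Suppose there exist a function ψ satisfying Condition-A and a function φ ∈ Φ such that for all x, y ∈ K: ψ(d(Tx,Ty), d(Tx,Ty)) ≤ φ(max{ψ(d(Ax,Ay), d(Ax,Tx)), ψ(d(Ax,Ay), d(Ay,Ty)), ψ(d(Ax,Tx), d(Ay,Ty)), ψ(d(Ay,Ty), d(Ax,Tx)), min{ψ(d(Ay,Tx), d(Ax,Tx)), ψ(d(Ax,Ty), d(Ay,Ty))}, min{ψ(d(Ay,Tx), d(Ay,Ty)), ψ(d(Ax,Ty), d(Ax,Tx))}}). Assume the pair (A,T)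 is weakly compatible and the closure of T(K) is contained in A(K). If either T(K) or A(K) is complete, then A and T have a unique common fixed point. -/
open Set Filter Topology
open scoped NNReal

variable {ψ : ℝ≥0 → ℝ≥0 → ℝ≥0} {φ : ℝ≥0 → ℝ≥0}

namespace ConditionA

theorem mono (hψ : ConditionA ψ) {s s' t t' : ℝ≥0} (hs : s ≤ s') (ht : t ≤ t') :
    ψ s t ≤ ψ s' t' :=
  (hψ.2.1 t hs).trans (hψ.2.2.1 s' ht)

theorem eq_zero_of_apply_self_eq_zero (hψ : ConditionA ψ) {t : ℝ≥0} (h : ψ t t = 0) : t = 0 :=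
  hψ.2.2.2.2 t <| nonpos_iff_eq_zero.mp <| (hψ.2.2.1 t zero_le).trans_eq h

theorem tendsto {ι : Type*} {l : Filter ι} (hψ : ConditionA ψ) {f g : ι → ℝ≥0} {s t : ℝ≥0}
    (hf : Tendsto f l (𝓝 s)) (hg : Tendsto g l (𝓝 t)) :
    Tendsto (fun i => ψ (f i) (g i)) l (𝓝 (ψ s t)) :=
  (hψ.1.tendsto (s, t)).comp (hf.prodMk_nhds hg)

end ConditionA

theorem InPhi.eq_zero_of_le_apply (hφ : InPhi φ) {t : ℝ≥0} (h : t ≤ φ t) : t = 0 := by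
  by_contra ht
  exact (h.trans_lt (hφ.2.2 t (pos_iff_ne_zero.mpr ht)).2).false

theorem eq_zero_of_psi_le_phi_psi (hψ : ConditionA ψ) (hφ : InPhi φ) {t : ℝ≥0}
    (h : ψ t t ≤ φ (ψ t t)) : t = 0 :=
  hψ.eq_zero_of_apply_self_eq_zero (hφ.eq_zero_of_le_apply h)

theorem eq_zero_of_tendsto_of_psi_le_phi_psi {ι : Type*} {l : Filter ι} [l.NeBot]
    (hψ : ConditionA ψ) (hφ : InPhi φ) {f g : ι → ℝ≥0} {t : ℝ≥0}
    (hf : Tendsto f l (𝓝 t)) (hg : Tendsto g l (𝓝 t))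
    (h : ∀ i, ψ (f i) (f i) ≤ φ (ψ (g i) (g i))) : t = 0 :=
  eq_zero_of_psi_le_phi_psi hψ hφ <|
    le_of_tendsto_of_tendsto' (hψ.tendsto hf hf) ((hφ.2.1.tendsto _).comp (hψ.tendsto hg hg)) h

section MetricSpace

variable {X : Type*} [MetricSpace X]

theorem tendsto_nndist_of_tendsto_nndist_zero {ι : Type*} {l : Filter ι} {a a' b b' : ι → X}
    {ε : ℝ≥0} (h : Tendsto (fun i => nndist (a i) (b i)) l (𝓝 ε))
    (ha : Tendsto (fun i => nndist (a i) (a' i)) l (𝓝 0))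
    (hb : Tendsto (fun i => nndist (b i) (b' i)) l (𝓝 0)) :
    Tendsto (fun i => nndist (a' i) (b' i)) l (𝓝 ε) := by
  rw [← NNReal.tendsto_coe] at h ha hb ⊢
  simp only [coe_nndist, NNReal.coe_zero] at h ha hb ⊢
  refine h.congr_dist (squeeze_zero (fun _ => dist_nonneg)
    (fun i => dist_dist_dist_le _ _ _ _) ?_)
  simpa using ha.add hb

theorem exists_tendsto_nndist_of_not_cauchySeq {y : ℕ → X}
    (hd : Tendsto (fun n => nndist (y n) (y (n + 1))) atTop (𝓝 0)) (hy : ¬CauchySeq y) :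
    ∃ ε ≠ 0, ∃ q : ℕ → ℕ, (∀ k, k ≤ q k) ∧
      Tendsto (fun k => nndist (y k) (y (q k))) atTop (𝓝 ε) := by
  rw [Metric.cauchySeq_iff'] at hy
  push Not at hy
  obtain ⟨ε, hε, hfar⟩ := hy
  lift ε to ℝ≥0 using hε.le
  replace hε : ε ≠ 0 := by exact_mod_cast hε.ne'
  have hcross : ∀ k, ∃ i, ¬ε ≤ nndist (y k) (y (k + i)) ∧ ε ≤ nndist (y k) (y (k + i + 1)) := by
    intro k
    obtain ⟨n, hkn, hn⟩ := hfar k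
    refine Nat.exists_not_and_succ_of_not_zero_of_exists (by simpa using hε) ⟨n - k, ?_⟩
    rwa [Nat.add_sub_cancel' hkn, nndist_comm, ← NNReal.coe_le_coe, coe_nndist]
  choose i hnear hfar using hcross
  refine ⟨ε, hε, fun k => k + i k + 1, fun k => le_self_add.trans (Nat.le_succ _), ?_⟩
  have hdr : Tendsto (fun k => nndist (y (k + i k)) (y (k + i k + 1))) atTop (𝓝 0) :=
    hd.comp (tendsto_atTop_mono (fun k => le_self_add) tendsto_id)
  refine tendsto_of_tendsto_of_tendsto_of_le_of_le tendsto_const_nhds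
    (by simpa using tendsto_const_nhds.add hdr) hfar fun k => ?_
  exact (nndist_triangle _ (y (k + i k)) _).trans (add_le_add (not_le.mp (hnear k)).le le_rfl)

/-- The maximum in the contractive condition, read with `a = A x`, `b = T x`, `a' = A y`,
`b' = T y`. -/
def jungckBound (ψ : ℝ≥0 → ℝ≥0 → ℝ≥0) (a b a' b' : X) : ℝ≥0 :=
  max (ψ (nndist a a') (nndist a b))
    (max (ψ (nndist a a') (nndist a' b'))
    (max (ψ (nndist a b) (nndist a' b'))
    (max (ψ (nndist a' b') (nndist a b))
    (max (min (ψ (nndist a' b) (nndist a b)) (ψ (nndist a b') (nndist a' b')))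
         (min (ψ (nndist a' b) (nndist a' b')) (ψ (nndist a b') (nndist a b)))))))

theorem jungckBound_le (hψ : ConditionA ψ) {a b a' b' : X} {c : ℝ≥0}
    (haa' : nndist a a' ≤ c) (hab : nndist a b ≤ c) (ha'b' : nndist a' b' ≤ c)
    (ha'b : nndist a' b ≤ c) : jungckBound ψ a b a' b' ≤ ψ c c := by
  unfold jungckBound
  refine max_le (hψ.mono haa' hab) (max_le (hψ.mono haa' ha'b') (max_le (hψ.mono hab ha'b')
    (max_le (hψ.mono ha'b' hab) (max_le ((min_le_left _ _).trans (hψ.mono ha'b hab))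
      ((min_le_left _ _).trans (hψ.mono ha'b ha'b'))))))

theorem eq_of_le_jungckBound (hψ : ConditionA ψ) (hφ : InPhi φ) {b b' : X}
    (h : ψ (nndist b b') (nndist b b') ≤ φ (jungckBound ψ b b b' b')) : b = b' := by
  refine nndist_eq_zero.mp (eq_zero_of_psi_le_phi_psi hψ hφ (h.trans (hφ.1 ?_)))
  exact jungckBound_le hψ le_rfl (by simp) (by simp) (nndist_comm b' b).le

variable {y : ℕ → X}

theorem tendsto_nndist_succ_of_le_jungckBound (hψ : ConditionA ψ) (hφ : InPhi φ)
    (h : ∀ n, ψ (nndist (y (n + 1)) (y (n + 2))) (nndist (y (n + 1)) (y (n + 2))) ≤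
      φ (jungckBound ψ (y n) (y (n + 1)) (y (n + 1)) (y (n + 2)))) :
    Tendsto (fun n => nndist (y n) (y (n + 1))) atTop (𝓝 0) := by
  set d := fun n => nndist (y n) (y (n + 1))
  have hstep : ∀ n, ψ (d (n + 1)) (d (n + 1)) ≤ φ (ψ (max (d n) (d (n + 1)))
      (max (d n) (d (n + 1)))) := fun n =>
    (h n).trans <| hφ.1 <| jungckBound_le hψ (le_max_left _ _) (le_max_left _ _)
      (le_max_right _ _) (by simp)
  have hanti : Antitone d := by
    refine antitone_nat_of_succ_le fun n => le_of_not_gt fun hlt => ?_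
    have := hstep n
    rw [max_eq_right hlt.le] at this
    exact (eq_zero_of_psi_le_phi_psi hψ hφ this ▸ hlt).not_ge zero_le
  have hlim := tendsto_atTop_ciInf hanti (OrderBot.bddBelow _)
  have hinf : ⨅ n, d n = 0 := by
    refine eq_zero_of_tendsto_of_psi_le_phi_psi hψ hφ (hlim.comp (tendsto_add_atTop_nat 1)) hlim
      fun n => ?_
    simpa only [Function.comp_apply, max_eq_left (hanti n.le_succ)] using hstep n
  rwa [hinf] at hlim

theorem cauchySeq_of_le_jungckBound (hψ : ConditionA ψ) (hφ : InPhi φ)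
    (h : ∀ m n, ψ (nndist (y (m + 1)) (y (n + 1))) (nndist (y (m + 1)) (y (n + 1))) ≤
      φ (jungckBound ψ (y m) (y (m + 1)) (y n) (y (n + 1)))) :
    CauchySeq y := by
  have hd := tendsto_nndist_succ_of_le_jungckBound hψ hφ fun n => h n (n + 1)
  by_contra hy
  obtain ⟨ε, hε, q, hq, hD⟩ := exists_tendsto_nndist_of_not_cauchySeq hd hy
  have hdq : Tendsto (fun k => nndist (y (q k)) (y (q k + 1))) atTop (𝓝 0) :=
    hd.comp (tendsto_atTop_mono hq tendsto_id)
  have hE : Tendsto (fun k => nndist (y (k + 1)) (y (q k + 1))) atTop (𝓝 ε) :=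
    tendsto_nndist_of_tendsto_nndist_zero hD hd hdq
  have hF : Tendsto (fun k => nndist (y (q k)) (y (k + 1))) atTop (𝓝 ε) := by
    simpa only [nndist_comm (y (q _))] using
      tendsto_nndist_of_tendsto_nndist_zero (b' := fun k => y (q k)) hD hd (by simp)
  set c := fun k => max (max (nndist (y k) (y (q k))) (nndist (y k) (y (k + 1))))
    (max (nndist (y (q k)) (y (q k + 1))) (nndist (y (q k)) (y (k + 1))))
  have hc : Tendsto c atTop (𝓝 ε) := by
    simpa using (hD.max hd).max (hdq.max hF)
  refine hε (eq_zero_of_tendsto_of_psi_le_phi_psi hψ hφ hE hc fun k => (h k (q k)).trans (hφ.1 ?_))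
  exact jungckBound_le hψ (by simp [c]) (by simp [c]) (by simp [c]) (by simp [c])

theorem eq_of_tendsto_of_le_jungckBound (hψ : ConditionA ψ) (hφ : InPhi φ) {z w : X}
    (hy : Tendsto y atTop (𝓝 z))
    (h : ∀ n, ψ (nndist (y (n + 1)) w) (nndist (y (n + 1)) w) ≤
      φ (jungckBound ψ (y n) (y (n + 1)) z w)) : w = z := by
  have hyz : Tendsto (fun n => nndist (y n) z) atTop (𝓝 0) := by
    simpa using hy.nndist (tendsto_const_nhds (x := z))
  have hd : Tendsto (fun n => nndist (y n) (y (n + 1))) atTop (𝓝 0) := by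
    simpa using hy.nndist (hy.comp (tendsto_add_atTop_nat 1))
  have hzy : Tendsto (fun n => nndist z (y (n + 1))) atTop (𝓝 0) := by
    simpa using (tendsto_const_nhds (x := z)).nndist (hy.comp (tendsto_add_atTop_nat 1))
  have hf : Tendsto (fun n => nndist (y (n + 1)) w) atTop (𝓝 (nndist z w)) :=
    (hy.comp (tendsto_add_atTop_nat 1)).nndist tendsto_const_nhds
  set c := fun n => max (max (nndist (y n) z) (nndist (y n) (y (n + 1))))
    (max (nndist z w) (nndist z (y (n + 1))))
  have hc : Tendsto c atTop (𝓝 (nndist z w)) := by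
    simpa using (hyz.max hd).max (tendsto_const_nhds.max hzy)
  refine (nndist_eq_zero.mp (eq_zero_of_tendsto_of_psi_le_phi_psi hψ hφ hf hc
    fun n => (h n).trans (hφ.1 ?_))).symm
  exact jungckBound_le hψ (by simp [c]) (by simp [c]) (by simp [c]) (by simp [c])

end MetricSpace

theorem exists_seq_apply_succ_eq {α : Type*} {K : Set α} (hK : K.Nonempty) {A T : α → α}
    (hTA : T '' K ⊆ A '' K) : ∃ x : ℕ → α, (∀ n, x n ∈ K) ∧ ∀ n, A (x (n + 1)) = T (x n) := by
  choose g hgK hgA using fun p : K => hTA ⟨p, p.2, rfl⟩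
  let s : ℕ → K := fun n => (fun p => ⟨g p, hgK p⟩)^[n] ⟨hK.some, hK.some_mem⟩
  refine ⟨fun n => s n, fun n => (s n).2, fun n => ?_⟩
  simp only [s, Function.iterate_succ_apply']
  exact hgA _

theorem stmt_2_general {X : Type*} [MetricSpace X] (K : Set X) (hK : K.Nonempty)
    (A T : X → X)
    (hT : MapsTo T K K)
    (ψ : ℝ≥0 → ℝ≥0 → ℝ≥0) (hψ : ConditionA ψ)
    (φ : ℝ≥0 → ℝ≥0) (hφ : InPhi φ)
    (hcontr : ∀ x ∈ K, ∀ y ∈ K,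
      ψ (nndist (T x) (T y)) (nndist (T x) (T y)) ≤
        φ (max (ψ (nndist (A x) (A y)) (nndist (A x) (T x)))
          (max (ψ (nndist (A x) (A y)) (nndist (A y) (T y)))
          (max (ψ (nndist (A x) (T x)) (nndist (A y) (T y)))
          (max (ψ (nndist (A y) (T y)) (nndist (A x) (T x)))
          (max (min (ψ (nndist (A y) (T x)) (nndist (A x) (T x)))
                    (ψ (nndist (A x) (T y)) (nndist (A y) (T y))))
               (min (ψ (nndist (A y) (T x)) (nndist (A y) (T y)))
                    (ψ (nndist (A x) (T y)) (nndist (A x) (T x))))))))))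
    (hAT : ∀ x ∈ K, A x = T x → A (T x) = T (A x))
    (hTA : closure (T '' K) ⊆ A '' K)
    (hcomp : IsComplete (T '' K) ∨ IsComplete (A '' K)) :
    ∃! z, z ∈ K ∧ A z = z ∧ T z = z := by
  have hJ : ∀ x ∈ K, ∀ y ∈ K, ψ (nndist (T x) (T y)) (nndist (T x) (T y)) ≤
      φ (jungckBound ψ (A x) (T x) (A y) (T y)) := hcontr
  have hcoinc : ∀ a ∈ K, ∀ b ∈ K, A a = T a → A b = T b → T a = T b := fun a ha b hb hab hbb =>
    eq_of_le_jungckBound hψ hφ (by simpa only [hab, hbb] using hJ a ha b hb)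
  obtain ⟨x, hxK, hx⟩ := exists_seq_apply_succ_eq hK (subset_closure.trans hTA)
  have hy : ∀ m n, ψ (nndist (T (x (m + 1))) (T (x (n + 1))))
      (nndist (T (x (m + 1))) (T (x (n + 1)))) ≤
      φ (jungckBound ψ (T (x m)) (T (x (m + 1))) (T (x n)) (T (x (n + 1)))) := fun m n => by
    simpa only [hx] using hJ _ (hxK (m + 1)) _ (hxK (n + 1))
  obtain ⟨_, ⟨u, hu, rfl⟩, hlim⟩ : ∃ z ∈ A '' K, Tendsto (fun n => T (x n)) atTop (𝓝 z) := by
    rcases hcomp with hcomp | hcomp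
    · obtain ⟨z, hz, hlim⟩ := cauchySeq_tendsto_of_isComplete hcomp
        (fun n => mem_image_of_mem T (hxK n)) (cauchySeq_of_le_jungckBound hψ hφ hy)
      exact ⟨z, hTA (subset_closure hz), hlim⟩
    · exact cauchySeq_tendsto_of_isComplete hcomp (fun n => ⟨_, hxK (n + 1), hx n⟩)
        (cauchySeq_of_le_jungckBound hψ hφ hy)
  have hTu : T u = A u := eq_of_tendsto_of_le_jungckBound hψ hφ hlim fun n => by
    simpa only [hx] using hJ _ (hxK (n + 1)) u hu
  have hTuK : T u ∈ K := hT hu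
  have hATu : A (T u) = T (T u) := by rw [hAT u hu hTu.symm, hTu]
  have hTTu : T (T u) = T u := (hcoinc u hu _ hTuK hTu.symm hATu).symm
  refine ⟨T u, ⟨hTuK, hATu.trans hTTu, hTTu⟩, fun w ⟨hwK, hAw, hTw⟩ => ?_⟩
  rw [← hTw, ← hTTu]
  exact hcoinc w hwK _ hTuK (hAw.trans hTw.symm) hATu

theorem stmt_2 {X : Type*} [MetricSpace X] (K : Set X) (hK : K.Nonempty)
    (A T : X → X)
    (hA : MapsTo A K K) (hT : MapsTo T K K)
    (ψ : ℝ≥0 → ℝ≥0 → ℝ≥0) (hψ : ConditionA ψ)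
    (φ : ℝ≥0 → ℝ≥0) (hφ : InPhi φ)
    (hcontr : ∀ x ∈ K, ∀ y ∈ K,
      ψ (nndist (T x) (T y)) (nndist (T x) (T y)) ≤
        φ (max (ψ (nndist (A x) (A y)) (nndist (A x) (T x)))
          (max (ψ (nndist (A x) (A y)) (nndist (A y) (T y)))
          (max (ψ (nndist (A x) (T x)) (nndist (A y) (T y)))
          (max (ψ (nndist (A y) (T y)) (nndist (A x) (T x)))
          (max (min (ψ (nndist (A y) (T x)) (nndist (A x) (T x)))
                    (ψ (nndist (A x) (T y)) (nndist (A y) (T y))))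
               (min (ψ (nndist (A y) (T x)) (nndist (A y) (T y)))
                    (ψ (nndist (A x) (T y)) (nndist (A x) (T x))))))))))
    (hAT : ∀ x ∈ K, A x = T x → A (T x) = T (A x))
    (hTA : closure (T '' K) ⊆ A '' K)
    (hcomp : IsComplete (T '' K) ∨ IsComplete (A '' K)) :
    ∃! z, z ∈ K ∧ A z = z ∧ T z = z :=
  stmt_2_general K hK A T hT ψ hψ φ hφ hcontr hAT hTA hcomp
end

section
/- Let (X,d) be a metric space and K a nonempty subset of X. Let A and T be selfmaps of K. Suppose there exists r ∈ [0,1) such that for all x, y ∈ K: d(Tx,Ty) ≤ r·max{d(Ax,Ay), d(Ax,Tx), d(Ay,Ty), min{d(Ay,Tx), d(Ax,Ty)}}. Assume the pair (A,T) is weakly compatible and T(K) ⊆ A(K). If either T(K) or A(K) is complete, then A and T have a unique common fixed point. -/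
open Set Filter Topology
open scoped NNReal

private lemma key_nnr {a b r : ℝ} (ha : 0 ≤ a) (hb : 0 ≤ b) (hr0 : 0 ≤ r) (hr : r < 1)
    (h : b ≤ r * max a b) : b ≤ r * a := by
  rcases max_cases a b with ⟨he, _⟩ | ⟨he, hle⟩
  · rwa [he] at h
  · rw [he] at h
    nlinarith

theorem stmt_13 {X : Type*} [MetricSpace X] (K : Set X) (hK : K.Nonempty)
    (A T : X → X) (hA : MapsTo A K K) (hT : MapsTo T K K)
    (r : ℝ≥0) (hr : r < 1)
    (hcontr : ∀ x ∈ K, ∀ y ∈ K,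
      nndist (T x) (T y) ≤
        r * max (nndist (A x) (A y))
          (max (nndist (A x) (T x))
          (max (nndist (A y) (T y))
               (min (nndist (A y) (T x)) (nndist (A x) (T y))))))
    (hAT : ∀ x ∈ K, A x = T x → A (T x) = T (A x))
    (hTA : T '' K ⊆ A '' K)
    (hcomp : IsComplete (T '' K) ∨ IsComplete (A '' K)) :
    ∃! z, z ∈ K ∧ A z = z ∧ T z = z := by
  have hr' : (r : ℝ) < 1 := by exact_mod_cast hr
  have hr0 : (0 : ℝ) ≤ r := r.coe_nonneg
  -- real-valued contraction
  have hc : ∀ x ∈ K, ∀ y ∈ K,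
      dist (T x) (T y) ≤
        (r : ℝ) * max (dist (A x) (A y))
          (max (dist (A x) (T x))
          (max (dist (A y) (T y))
               (min (dist (A y) (T x)) (dist (A x) (T y))))) := by
    intro x hx y hy
    have h := hcontr x hx y hy
    simp only [dist_nndist]
    exact_mod_cast h
  obtain ⟨x0, hx0⟩ := hK
  have hstep : ∀ p : X, ∃ q : X, p ∈ K → q ∈ K ∧ A q = T p := by
    intro p
    by_cases hp : p ∈ K
    · obtain ⟨q, hq, hAq⟩ := hTA ⟨p, hp, rfl⟩
      exact ⟨q, fun _ => ⟨hq, hAq⟩⟩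
    · exact ⟨x0, fun h => absurd h hp⟩
  choose F hF using hstep
  set x : ℕ → X := fun n => F^[n] x0 with hxdef
  have hxs : ∀ n, x (n + 1) = F (x n) := fun n => Function.iterate_succ_apply' F n x0
  have hx : ∀ n, x n ∈ K := by
    intro n
    induction n with
    | zero => exact hx0
    | succ n ih => rw [hxs n]; exact (hF (x n) ih).1
  have hAx : ∀ n, A (x (n + 1)) = T (x n) := by
    intro n; rw [hxs n]; exact (hF (x n) (hx n)).2
  set y : ℕ → X := fun n => T (x n) with hydef
  have hyK : ∀ n, y n ∈ K := fun n => hT (hx n)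
  -- geometric estimate
  have hrec : ∀ n, dist (y (n + 1)) (y (n + 2)) ≤ (r : ℝ) * dist (y n) (y (n + 1)) := by
    intro n
    have h := hc (x (n + 1)) (hx _) (x (n + 2)) (hx _)
    rw [hAx n, hAx (n + 1)] at h
    rw [dist_self, min_eq_left dist_nonneg, max_eq_left dist_nonneg, ← max_assoc,
      max_self] at h
    exact key_nnr dist_nonneg dist_nonneg hr0 hr' h
  have hgeo : ∀ n, dist (y n) (y (n + 1)) ≤ dist (y 0) (y 1) * (r : ℝ) ^ n := by
    intro n
    induction n with
    | zero => simp
    | succ n ih =>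
        calc dist (y (n + 1)) (y (n + 2)) ≤ (r : ℝ) * dist (y n) (y (n + 1)) := hrec n
        _ ≤ (r : ℝ) * (dist (y 0) (y 1) * (r : ℝ) ^ n) := by
            exact mul_le_mul_of_nonneg_left ih hr0
        _ = dist (y 0) (y 1) * (r : ℝ) ^ (n + 1) := by ring
  have hcauchy : CauchySeq y := cauchySeq_of_le_geometric (r : ℝ) (dist (y 0) (y 1)) hr' hgeo
  -- limit
  obtain ⟨z, hzA, hz⟩ : ∃ z ∈ A '' K, Tendsto y atTop (𝓝 z) := by
    rcases hcomp with h | h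
    · obtain ⟨z, hzs, hz⟩ := cauchySeq_tendsto_of_isComplete h
        (fun n => ⟨x n, hx n, rfl⟩) hcauchy
      exact ⟨z, hTA hzs, hz⟩
    · obtain ⟨z, hzs, hz⟩ := cauchySeq_tendsto_of_isComplete h
        (fun n => by rw [hydef]; exact ⟨x (n + 1), hx _, hAx n⟩) hcauchy
      exact ⟨z, hzs, hz⟩
  obtain ⟨u, hu, hAu⟩ := hzA
  -- T u = z
  have hy1 : Tendsto (fun n => y (n + 1)) atTop (𝓝 z) := hz.comp (tendsto_add_atTop_nat 1)
  have hTu : T u = z := by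
    set c : ℝ := dist z (T u) with hcdef
    have hLHS : Tendsto (fun n => dist (y (n + 1)) (T u)) atTop (𝓝 c) :=
      hy1.dist tendsto_const_nhds
    have t1 : Tendsto (fun n => dist (y n) z) atTop (𝓝 0) := by
      simpa using hz.dist (tendsto_const_nhds : Tendsto (fun _ : ℕ => z) atTop (𝓝 z))
    have t2 : Tendsto (fun n => dist (y n) (y (n + 1))) atTop (𝓝 0) := by
      simpa using hz.dist hy1
    have t4 : Tendsto (fun n => dist z (y (n + 1))) atTop (𝓝 0) := by
      simpa using (tendsto_const_nhds : Tendsto (fun _ : ℕ => z) atTop (𝓝 z)).dist hy1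
    have t5 : Tendsto (fun n => dist (y n) (T u)) atTop (𝓝 c) :=
      hz.dist tendsto_const_nhds
    have hRHS : Tendsto (fun n => (r : ℝ) * max (dist (y n) z)
        (max (dist (y n) (y (n + 1)))
        (max c (min (dist z (y (n + 1))) (dist (y n) (T u)))))) atTop
        (𝓝 ((r : ℝ) * max 0 (max 0 (max c (min 0 c))))) :=
      tendsto_const_nhds.mul (t1.max (t2.max (tendsto_const_nhds.max (t4.min t5))))
    have hsimp : (r : ℝ) * max 0 (max 0 (max c (min 0 c))) = (r : ℝ) * c := by
      have hc0 : 0 ≤ c := dist_nonneg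
      rw [min_eq_left hc0, max_eq_left hc0, max_eq_right hc0, max_eq_right hc0]
    rw [hsimp] at hRHS
    have hineq : ∀ n, dist (y (n + 1)) (T u) ≤ (r : ℝ) * max (dist (y n) z)
        (max (dist (y n) (y (n + 1)))
        (max c (min (dist z (y (n + 1))) (dist (y n) (T u))))) := by
      intro n
      have h := hc (x (n + 1)) (hx _) u hu
      rw [hAx n, hAu] at h
      exact h
    have hcle : c ≤ (r : ℝ) * c := le_of_tendsto_of_tendsto' hLHS hRHS hineq
    have hc0 : 0 ≤ c := dist_nonneg
    have : c = 0 := by nlinarith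
    exact (dist_eq_zero.mp (hcdef ▸ this)).symm
  have zK : z ∈ K := hTu ▸ hT hu
  have hATz : A z = T z := by
    have h := hAT u hu (by rw [hAu, hTu])
    rwa [hTu, hAu] at h
  have hTz : T z = z := by
    have h := hc u hu z zK
    rw [hAu, hTu, hATz] at h
    simp only [dist_self, dist_comm (T z) z, min_self] at h
    rw [max_eq_right dist_nonneg, max_eq_right dist_nonneg, max_self] at h
    have hd0 : (0 : ℝ) ≤ dist z (T z) := dist_nonneg
    have : dist z (T z) = 0 := by nlinarith
    exact (dist_eq_zero.mp this).symm
  have hAz : A z = z := hATz.trans hTz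
  refine ⟨z, ⟨zK, hAz, hTz⟩, ?_⟩
  rintro w ⟨hwK, hAw, hTw⟩
  have h := hc z zK w hwK
  rw [hTz, hTw, hAz, hAw] at h
  simp only [dist_self, dist_comm w z, min_self] at h
  rw [max_eq_right dist_nonneg, max_eq_right dist_nonneg, max_self] at h
  have hd0 : (0 : ℝ) ≤ dist z w := dist_nonneg
  have : dist z w = 0 := by nlinarith
  exact (dist_eq_zero.mp this).symm
end

section
/- Let X = ℝ with the usual metric. Define T : ℝ → ℝ by T(x) = 10/32 if x < 3/8, T(x) = 3/8 if 3/8 ≤ x < 1/2, and T(x) = 1 if x ≥ 1/2; and define A : ℝ → ℝ by A(x) = 11/32 if x < 3/8, A(x) = (1+x)/4 if 3/8 ≤ x < 1/2, and A(x) = (1+x)/2 if x ≥ 1/2. Then A and T are not compatible (there exists a sequence {xₙ} with lim Axₙ = lim Txₙ = t for some t ∈ ℝ, but d(ATxₙ, TAxₙ) does not tend to 0), yet A and T are weakly compatible (they commute at every coincidence point). -/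
open Filter Topology

/-- The map `T` from Example 1.8. -/
noncomputable def Tmap : ℝ → ℝ := fun x =>
  if x < 3/8 then 10/32 else if x < 1/2 then 3/8 else 1

/-- The map `A` from Example 1.8. -/
noncomputable def Amap : ℝ → ℝ := fun x =>
  if x < 3/8 then 11/32 else if x < 1/2 then (1 + x)/4 else (1 + x)/2

theorem stmt_14 :
    (∃ (x : ℕ → ℝ) (t : ℝ),
      Tendsto (fun n => Amap (x n)) atTop (𝓝 t) ∧
      Tendsto (fun n => Tmap (x n)) atTop (𝓝 t) ∧
      ¬ Tendsto (fun n => dist (Amap (Tmap (x n))) (Tmap (Amap (x n)))) atTop (𝓝 0)) ∧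
    (∀ x : ℝ, Amap x = Tmap x → Amap (Tmap x) = Tmap (Amap x)) := by
  constructor
  · refine ⟨fun n => 1/2 - 1/(8*(n+1)), 3/8, ?_, ?_, ?_⟩
    all_goals
      have key : ∀ n : ℕ, Amap (1/2 - 1/(8*((n:ℝ)+1))) = 3/8 - (1/32) * (1/((n:ℝ)+1)) := by
        intro n
        have hn : (1:ℝ) ≤ (n:ℝ) + 1 := by
          linarith [Nat.cast_nonneg (α := ℝ) n]
        have hpos : (0:ℝ) < (n:ℝ)+1 := by linarith
        have h1 : (1:ℝ)/(8*((n:ℝ)+1)) ≤ 1/8 := by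
          rw [div_le_div_iff₀ (by linarith) (by norm_num)]
          nlinarith
        have h2 : (0:ℝ) < 1/(8*((n:ℝ)+1)) := by positivity
        unfold Amap
        rw [if_neg (by linarith), if_pos (by linarith)]
        field_simp
        ring
    · have key2 : ∀ n : ℕ, (fun n : ℕ => Amap (1/2 - 1/(8*((n:ℝ)+1)))) n
          = 3/8 - (1/32) * (1/((n:ℝ)+1)) := key
      rw [show (3:ℝ)/8 = 3/8 - (1/32) * 0 by ring]
      exact (funext key2) ▸
        (tendsto_const_nhds.sub (tendsto_const_nhds.mul tendsto_one_div_add_atTop_nhds_zero_nat))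
    · have hT : ∀ n : ℕ, Tmap ((1:ℝ)/2 - 1/(8*((n:ℝ)+1))) = 3/8 := by
        intro n
        have hpos : (0:ℝ) < (n:ℝ)+1 := by positivity
        have h1 : (1:ℝ)/(8*((n:ℝ)+1)) ≤ 1/8 := by
          rw [div_le_div_iff₀ (by linarith) (by norm_num)]
          nlinarith [Nat.cast_nonneg (α := ℝ) n]
        have h2 : (0:ℝ) < 1/(8*((n:ℝ)+1)) := by positivity
        unfold Tmap
        rw [if_neg (by linarith), if_pos (by linarith)]
      simp only [hT]
      exact tendsto_const_nhds
    · intro h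
      have hd : ∀ n : ℕ, dist (Amap (Tmap ((1:ℝ)/2 - 1/(8*((n:ℝ)+1)))))
          (Tmap (Amap ((1:ℝ)/2 - 1/(8*((n:ℝ)+1))))) = 1/32 := by
        intro n
        have hpos : (0:ℝ) < (n:ℝ)+1 := by positivity
        have h1 : (1:ℝ)/(8*((n:ℝ)+1)) ≤ 1/8 := by
          rw [div_le_div_iff₀ (by linarith) (by norm_num)]
          nlinarith [Nat.cast_nonneg (α := ℝ) n]
        have h2 : (0:ℝ) < 1/(8*((n:ℝ)+1)) := by positivity
        have hT : Tmap ((1:ℝ)/2 - 1/(8*((n:ℝ)+1))) = 3/8 := by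
          unfold Tmap
          rw [if_neg (by linarith), if_pos (by linarith)]
        have hA := key n
        have h3 : (0:ℝ) < (1/32) * (1/((n:ℝ)+1)) := by positivity
        rw [hT, hA]
        have hAT : Amap (3/8 : ℝ) = 11/32 := by
          unfold Amap
          rw [if_neg (by norm_num), if_pos (by norm_num)]
          norm_num
        have hTA : Tmap ((3:ℝ)/8 - (1/32) * (1/((n:ℝ)+1))) = 10/32 := by
          unfold Tmap
          rw [if_pos (by linarith)]
        rw [hAT, hTA, Real.dist_eq]
        norm_num
      simp only [hd] at h
      have := tendsto_nhds_unique h ((tendsto_const_nhds : Tendsto (fun _ : ℕ => (1:ℝ)/32) atTop (𝓝 (1/32))))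
      norm_num at this
  · intro x hx
    unfold Amap Tmap at hx ⊢
    split_ifs at hx with h1 h2
    · norm_num at hx
    · exfalso; linarith [show x = 1/2 by linarith]
    · have hx1 : x = 1 := by linarith
      subst hx1
      norm_num
end
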